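/- arXiv:1105.5954 — 2 statements merged into one kernel-verified Lean document; each statement's English description precedes it below -/
import Mathlib

section
/- Fix a constant c_min > 0 and a penalty term Π such that each π_i is continuously differentiable on (0,∞) with π_i'(y) ≥ c_min for all y ∈ (0,∞) and all i. Suppose that for every ρ > 0 there is a solution z_ρ of the penalised obstacle equation, and let z* be the solution of the discrete HJB obstacle problem min{ max_{u∈U}{A_u z* − b_u}, Ãz* − b̃ } = 0. Then there exists a constant C > 0, depending on c_min but not on ρ or Π, such that ‖z* − z_ρ‖∞ ≤ C/ρ for every ρ > 0. -/
open Matrix Filter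

/-- The set `K^o_N`: Z-matrices (non-positive off-diagonal entries) which are
strictly diagonally dominant. -/
def KoMat {N : ℕ} (A : Matrix (Fin N) (Fin N) ℝ) : Prop :=
  (∀ r s, r ≠ s → A r s ≤ 0) ∧
  ∀ r, ∑ s ∈ Finset.univ.erase r, |A r s| < A r r

/-- A penalty term `Π(y) = (π₁(y₁),…,π_N(y_N))`: each `π i` is continuous,
non-decreasing, identically zero on `(-∞,0]` and strictly positive on `(0,∞)`. -/
structure PenaltyTerm (N : ℕ) where
  π : Fin N → ℝ → ℝ
  cont : ∀ i, Continuous (π i)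
  mono : ∀ i, Monotone (π i)
  eq_zero : ∀ i y, y ≤ 0 → π i y = 0
  pos : ∀ i y, 0 < y → 0 < π i y

/-- The penalised obstacle equation
`max_{u∈U}{A_u z - b_u} - ρ · Π(b̃ - Ã z) = 0` (componentwise); the maximum over
the compact set `U` is expressed via `sSup` of the image. -/
def PenObstEq {N : ℕ} (𝔄 : ℝ → Matrix (Fin N) (Fin N) ℝ) (𝔅 : ℝ → (Fin N → ℝ))
    (U : Set ℝ) (At : Matrix (Fin N) (Fin N) ℝ) (bt : Fin N → ℝ)
    (P : PenaltyTerm N) (ρ : ℝ) (z : Fin N → ℝ) : Prop :=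
  ∀ i : Fin N,
    sSup ((fun u => (𝔄 u *ᵥ z - 𝔅 u) i) '' U) -
      ρ * P.π i ((bt - At *ᵥ z) i) = 0

/-!
Everything is read off at an index `i` where a difference `w` of two solutions is maximal:
there a strictly diagonally dominant Z-matrix `A` satisfies `(A w)_i ≥ δ_i(A) w_i`, with the
diagonal gap `δ_i(A) = A i i - ∑_{j ≠ i} |A i j|`. At a positive maximum of `z_ρ - z*` the
penalty would have to be active, i.e. `(Ãz_ρ)_i < b̃_i ≤ (Ãz*)_i`, contradicting
`(Ã(z_ρ - z*))_i > 0`; hence `z_ρ ≤ z*`. At a maximum `i` of `z* - z_ρ` either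
`max_u (A_u z* - b_u)_i = 0`, which forces `z*_i = z_ρ,i`, or `i` is a contact point, and then
`ρ c_min δ_i(Ã) (z* - z_ρ)_i ≤ ρ π_i((b̃ - Ãz_ρ)_i) = max_u (A_u z_ρ - b_u)_i`, which is at most
`max_u (A_u z* - b_u)_i`, a bound independent of `ρ` and `Π`.
-/

section DiagonalDominance

variable {ι : Type*} [Fintype ι] [DecidableEq ι]

def diagGap (A : Matrix ι ι ℝ) (i : ι) : ℝ :=
  A i i - ∑ j ∈ Finset.univ.erase i, |A i j|

theorem diagGap_mul_le_mulVec {A : Matrix ι ι ℝ} (hA : ∀ r s, r ≠ s → A r s ≤ 0)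
    {w : ι → ℝ} {i : ι} (hmax : ∀ j, w j ≤ w i) (hw : 0 ≤ w i) :
    diagGap A i * w i ≤ (A *ᵥ w) i := by
  have hsplit : (A *ᵥ w) i = ∑ j ∈ Finset.univ.erase i, A i j * w j + A i i * w i := by
    rw [Finset.sum_erase_add _ _ (Finset.mem_univ i)]
    rfl
  have hoff : ∀ j ∈ Finset.univ.erase i, -|A i j| * w i ≤ A i j * w j := fun j hj =>
    calc -|A i j| * w i ≤ A i j * w i := mul_le_mul_of_nonneg_right (neg_abs_le _) hw
      _ ≤ A i j * w j :=
        mul_le_mul_of_nonpos_left (hmax j) (hA i j (Finset.ne_of_mem_erase hj).symm)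
  have hsum := Finset.sum_le_sum hoff
  rw [← Finset.sum_mul, Finset.sum_neg_distrib] at hsum
  rw [hsplit, diagGap, sub_mul]
  linarith

end DiagonalDominance

theorem KoMat.diagGap_pos {N : ℕ} {A : Matrix (Fin N) (Fin N) ℝ} (hA : KoMat A) (i : Fin N) :
    0 < diagGap A i :=
  sub_pos.mpr (hA.2 i)

theorem KoMat.mulVec_pos_of_isMax {N : ℕ} {A : Matrix (Fin N) (Fin N) ℝ} (hA : KoMat A)
    {w : Fin N → ℝ} {i : Fin N} (hmax : ∀ j, w j ≤ w i) (hw : 0 < w i) :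
    0 < (A *ᵥ w) i :=
  (mul_pos (hA.diagGap_pos i) hw).trans_le (diagGap_mul_le_mulVec hA.1 hmax hw.le)

namespace PenaltyTerm

variable {N : ℕ} (P : PenaltyTerm N)

theorem nonneg (i : Fin N) (y : ℝ) : 0 ≤ P.π i y := by
  rcases le_or_gt y 0 with hy | hy
  · exact (P.eq_zero i y hy).ge
  · exact (P.pos i y hy).le

theorem pos_of_apply_pos {i : Fin N} {y : ℝ} (h : 0 < P.π i y) : 0 < y := by
  by_contra! hy
  exact h.ne' (P.eq_zero i y hy)

theorem mul_le_of_le_deriv {dπ : Fin N → ℝ → ℝ}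
    (hderiv : ∀ i y, 0 < y → HasDerivAt (P.π i) (dπ i y) y)
    {c : ℝ} (hc : ∀ i y, 0 < y → c ≤ dπ i y) (i : Fin N) {y : ℝ} (hy : 0 < y) :
    c * y ≤ P.π i y := by
  obtain ⟨x, hx, hslope⟩ := exists_hasDerivAt_eq_slope (P.π i) (dπ i) hy
    (P.cont i).continuousOn (fun x hx => hderiv i x hx.1)
  have h := hc i x hx.1
  rw [hslope, P.eq_zero i 0 le_rfl, sub_zero, sub_zero, le_div_iff₀ hy] at h
  exact h

end PenaltyTerm

section Hamiltonian

variable {ι 𝒰 : Type*} [Fintype ι] [TopologicalSpace 𝒰]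

noncomputable def hamiltonian (𝔄 : 𝒰 → Matrix ι ι ℝ) (𝔅 : 𝒰 → ι → ℝ) (U : Set 𝒰)
    (z : ι → ℝ) (i : ι) : ℝ :=
  sSup ((fun u => (𝔄 u *ᵥ z - 𝔅 u) i) '' U)

variable {𝔄 : 𝒰 → Matrix ι ι ℝ} {𝔅 : 𝒰 → ι → ℝ} {U : Set 𝒰}

theorem continuousOn_mulVec_sub_apply (h𝔄 : ContinuousOn 𝔄 U) (h𝔅 : ContinuousOn 𝔅 U)
    (z : ι → ℝ) (i : ι) : ContinuousOn (fun u => (𝔄 u *ᵥ z - 𝔅 u) i) U :=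
  (continuous_apply i).comp_continuousOn
    (((continuous_id.matrix_mulVec continuous_const).comp_continuousOn h𝔄).sub h𝔅)

theorem le_hamiltonian (hU : IsCompact U) (h𝔄 : ContinuousOn 𝔄 U) (h𝔅 : ContinuousOn 𝔅 U)
    (z : ι → ℝ) (i : ι) {u : 𝒰} (hu : u ∈ U) :
    (𝔄 u *ᵥ z - 𝔅 u) i ≤ hamiltonian 𝔄 𝔅 U z i :=
  le_csSup (hU.image_of_continuousOn (continuousOn_mulVec_sub_apply h𝔄 h𝔅 z i)).bddAbove
    (Set.mem_image_of_mem _ hu)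

theorem exists_hamiltonian_eq (hU : IsCompact U) (hU₀ : U.Nonempty)
    (h𝔄 : ContinuousOn 𝔄 U) (h𝔅 : ContinuousOn 𝔅 U) (z : ι → ℝ) (i : ι) :
    ∃ u ∈ U, (𝔄 u *ᵥ z - 𝔅 u) i = hamiltonian 𝔄 𝔅 U z i :=
  (hU.image_of_continuousOn (continuousOn_mulVec_sub_apply h𝔄 h𝔅 z i)).sSup_mem
    (hU₀.image _)

theorem exists_mulVec_sub_le_hamiltonian_sub (hU : IsCompact U) (hU₀ : U.Nonempty)
    (h𝔄 : ContinuousOn 𝔄 U) (h𝔅 : ContinuousOn 𝔅 U) (x y : ι → ℝ) (i : ι) :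
    ∃ u ∈ U, (𝔄 u *ᵥ (x - y)) i ≤ hamiltonian 𝔄 𝔅 U x i - hamiltonian 𝔄 𝔅 U y i := by
  obtain ⟨u, hu, hy⟩ := exists_hamiltonian_eq hU hU₀ h𝔄 h𝔅 y i
  refine ⟨u, hu, ?_⟩
  have hx := le_hamiltonian hU h𝔄 h𝔅 x i hu
  rw [mulVec_sub, ← hy]
  simp only [Pi.sub_apply] at hx ⊢
  linarith

end Hamiltonian

theorem hamiltonian_lt_of_isMax {N : ℕ} {𝒰 : Type*} [TopologicalSpace 𝒰]
    {𝔄 : 𝒰 → Matrix (Fin N) (Fin N) ℝ} {𝔅 : 𝒰 → Fin N → ℝ} {U : Set 𝒰}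
    (hU : IsCompact U) (hU₀ : U.Nonempty) (h𝔄 : ContinuousOn 𝔄 U) (h𝔅 : ContinuousOn 𝔅 U)
    (hKo : ∀ u ∈ U, KoMat (𝔄 u)) {x y : Fin N → ℝ} {i : Fin N}
    (hmax : ∀ j, x j - y j ≤ x i - y i) (hpos : 0 < x i - y i) :
    hamiltonian 𝔄 𝔅 U y i < hamiltonian 𝔄 𝔅 U x i := by
  obtain ⟨u, hu, hle⟩ := exists_mulVec_sub_le_hamiltonian_sub hU hU₀ h𝔄 h𝔅 x y i
  have := (hKo u hu).mulVec_pos_of_isMax (w := x - y) hmax hpos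
  linarith

section PenalisedObstacle

variable {N : ℕ} {𝔄 : ℝ → Matrix (Fin N) (Fin N) ℝ} {𝔅 : ℝ → Fin N → ℝ} {U : Set ℝ}
  {At : Matrix (Fin N) (Fin N) ℝ} {bt : Fin N → ℝ} {P : PenaltyTerm N} {ρ : ℝ}
  {zρ zstar : Fin N → ℝ}

theorem PenObstEq.hamiltonian_eq (heq : PenObstEq 𝔄 𝔅 U At bt P ρ zρ) (i : Fin N) :
    hamiltonian 𝔄 𝔅 U zρ i = ρ * P.π i ((bt - At *ᵥ zρ) i) :=
  sub_eq_zero.mp (heq i)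

theorem PenObstEq.le_of_supersolution (heq : PenObstEq 𝔄 𝔅 U At bt P ρ zρ)
    (hU : IsCompact U) (hU₀ : U.Nonempty) (h𝔄 : ContinuousOn 𝔄 U) (h𝔅 : ContinuousOn 𝔅 U)
    (hKo : ∀ u ∈ U, KoMat (𝔄 u)) (hAt : KoMat At)
    (hH : ∀ i, 0 ≤ hamiltonian 𝔄 𝔅 U zstar i) (hobst : ∀ i, bt i ≤ (At *ᵥ zstar) i) :
    zρ ≤ zstar := by
  intro j
  by_contra! hj
  obtain ⟨i, -, hmax⟩ :=
    Finset.univ.exists_max_image (fun k => zρ k - zstar k) ⟨j, Finset.mem_univ j⟩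
  replace hmax : ∀ k, zρ k - zstar k ≤ zρ i - zstar i := fun k => hmax k (Finset.mem_univ k)
  have hpos : 0 < zρ i - zstar i := by linarith [hmax j]
  have hlt := hamiltonian_lt_of_isMax hU hU₀ h𝔄 h𝔅 hKo (𝔅 := 𝔅) hmax hpos
  have hπ : 0 < P.π i ((bt - At *ᵥ zρ) i) := by
    refine (P.nonneg _ _).lt_of_ne fun h => ?_
    have := heq.hamiltonian_eq i
    rw [← h, mul_zero] at this
    linarith [hH i]
  have hAt_pos := hAt.mulVec_pos_of_isMax (w := zρ - zstar) hmax hpos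
  have harg := P.pos_of_apply_pos hπ
  rw [mulVec_sub] at hAt_pos
  simp only [Pi.sub_apply] at hAt_pos harg
  linarith [hobst i]

theorem PenObstEq.mul_sub_le_hamiltonian (heq : PenObstEq 𝔄 𝔅 U At bt P ρ zρ)
    (hU : IsCompact U) (hU₀ : U.Nonempty) (h𝔄 : ContinuousOn 𝔄 U) (h𝔅 : ContinuousOn 𝔅 U)
    (hKo : ∀ u ∈ U, KoMat (𝔄 u)) (hAt : KoMat At) (hρ : 0 ≤ ρ)
    {dπ : Fin N → ℝ → ℝ} (hderiv : ∀ i y, 0 < y → HasDerivAt (P.π i) (dπ i y) y)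
    {c : ℝ} (hc : ∀ i y, 0 < y → c ≤ dπ i y) {i : Fin N}
    (hzstar : min (hamiltonian 𝔄 𝔅 U zstar i) ((At *ᵥ zstar - bt) i) = 0)
    (hmax : ∀ j, zstar j - zρ j ≤ zstar i - zρ i) (hv : 0 ≤ zstar i - zρ i) :
    ρ * c * diagGap At i * (zstar i - zρ i) ≤ hamiltonian 𝔄 𝔅 U zstar i := by
  rcases hv.eq_or_lt with h0 | hpos
  · rw [← h0, mul_zero]
    exact hzstar ▸ min_le_left _ _
  have hlt := hamiltonian_lt_of_isMax hU hU₀ h𝔄 h𝔅 hKo (𝔅 := 𝔅) hmax hpos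
  rcases min_eq_iff.mp hzstar with ⟨hH0, -⟩ | ⟨hcontact, -⟩
  · have := heq.hamiltonian_eq i
    nlinarith [P.nonneg i ((bt - At *ᵥ zρ) i)]
  have harg : diagGap At i * (zstar i - zρ i) ≤ (bt - At *ᵥ zρ) i := by
    have := diagGap_mul_le_mulVec hAt.1 (w := zstar - zρ) hmax hpos.le
    rw [mulVec_sub] at this
    simp only [Pi.sub_apply] at this hcontact ⊢
    linarith
  calc ρ * c * diagGap At i * (zstar i - zρ i)
      = ρ * (c * (diagGap At i * (zstar i - zρ i))) := by ring
    _ ≤ ρ * P.π i (diagGap At i * (zstar i - zρ i)) := mul_le_mul_of_nonneg_left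
        (P.mul_le_of_le_deriv hderiv hc i (mul_pos (hAt.diagGap_pos i) hpos)) hρ
    _ ≤ ρ * P.π i ((bt - At *ᵥ zρ) i) := mul_le_mul_of_nonneg_left (P.mono i harg) hρ
    _ = hamiltonian 𝔄 𝔅 U zρ i := (heq.hamiltonian_eq i).symm
    _ ≤ hamiltonian 𝔄 𝔅 U zstar i := hlt.le

end PenalisedObstacle

theorem penalised_obstacle_error_estimate_general
    (N : ℕ) (a b : ℝ) (hab : a ≤ b)
    (𝔄 : ℝ → Matrix (Fin N) (Fin N) ℝ) (𝔅 : ℝ → (Fin N → ℝ))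
    (hAcont : ContinuousOn 𝔄 (Set.Icc a b)) (hbcont : ContinuousOn 𝔅 (Set.Icc a b))
    (hKo : ∀ u ∈ Set.Icc a b, KoMat (𝔄 u))
    (At : Matrix (Fin N) (Fin N) ℝ) (bt : Fin N → ℝ) (hAt : KoMat At)
    (cmin : ℝ) (hcmin : 0 < cmin)
    (zstar : Fin N → ℝ)
    (hzstar : ∀ i : Fin N,
      min (sSup ((fun u => (𝔄 u *ᵥ zstar - 𝔅 u) i) '' Set.Icc a b))
        ((At *ᵥ zstar - bt) i) = 0) :
    ∃ C > (0:ℝ),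
      ∀ (P : PenaltyTerm N) (dπ : Fin N → ℝ → ℝ),
        (∀ i y, 0 < y → HasDerivAt (P.π i) (dπ i y) y) →
        (∀ i, ContinuousOn (dπ i) (Set.Ioi (0:ℝ))) →
        (∀ i y, 0 < y → cmin ≤ dπ i y) →
        ∀ ρ > (0:ℝ), ∀ zρ : Fin N → ℝ,
          PenObstEq 𝔄 𝔅 (Set.Icc a b) At bt P ρ zρ →
          ‖zstar - zρ‖ ≤ C / ρ := by
  set H := hamiltonian 𝔄 𝔅 (Set.Icc a b) zstar
  have hU₀ : (Set.Icc a b).Nonempty := Set.nonempty_Icc.mpr hab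
  have hH : ∀ i, 0 ≤ H i := fun i => hzstar i ▸ min_le_left _ _
  have hobst : ∀ i, bt i ≤ (At *ᵥ zstar) i := fun i => sub_nonneg.mp (hzstar i ▸ min_le_right _ _)
  have hterm : ∀ i, 0 ≤ H i / (cmin * diagGap At i) :=
    fun i => div_nonneg (hH i) (mul_pos hcmin (hAt.diagGap_pos i)).le
  set C := 1 + ∑ i, H i / (cmin * diagGap At i)
  have hC : 0 < C := add_pos_of_pos_of_nonneg one_pos (Finset.sum_nonneg fun i _ => hterm i)
  refine ⟨C, hC, fun P dπ hderiv _ hc ρ hρ zρ heq => ?_⟩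
  have hle := heq.le_of_supersolution isCompact_Icc hU₀ hAcont hbcont hKo hAt hH hobst
  refine (pi_norm_le_iff_of_nonneg (div_pos hC hρ).le).mpr fun j => ?_
  obtain ⟨i, -, hmax⟩ :=
    Finset.univ.exists_max_image (fun k => zstar k - zρ k) ⟨j, Finset.mem_univ j⟩
  replace hmax : ∀ k, zstar k - zρ k ≤ zstar i - zρ i := fun k => hmax k (Finset.mem_univ k)
  have hbound := heq.mul_sub_le_hamiltonian isCompact_Icc hU₀ hAcont hbcont hKo hAt hρ.le
    hderiv hc (hzstar i) hmax (sub_nonneg.mpr (hle i))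
  have hgap := mul_pos hcmin (hAt.diagGap_pos i)
  rw [Pi.sub_apply, Real.norm_of_nonneg (sub_nonneg.mpr (hle j))]
  calc zstar j - zρ j ≤ zstar i - zρ i := hmax j
    _ ≤ H i / (cmin * diagGap At i) / ρ := by
      rw [div_div, le_div_iff₀ (mul_pos hgap hρ)]
      linarith
    _ ≤ C / ρ := by
      gcongr
      exact (Finset.single_le_sum (fun k _ => hterm k) (Finset.mem_univ i)).trans
        (le_add_of_nonneg_left zero_le_one)

/-- First-order penalisation error estimate `‖z* - z_ρ‖∞ ≤ C/ρ` for the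
obstacle problem, with `C > 0` depending on `c_min` but not on `ρ` nor on the
penalty term `Π` (assumed continuously differentiable on `(0,∞)` with
derivative `≥ c_min` there). -/
theorem penalised_obstacle_error_estimate
    (N : ℕ) (hN : 0 < N) (a b : ℝ) (hab : a ≤ b)
    (𝔄 : ℝ → Matrix (Fin N) (Fin N) ℝ) (𝔅 : ℝ → (Fin N → ℝ))
    (hAcont : ContinuousOn 𝔄 (Set.Icc a b)) (hbcont : ContinuousOn 𝔅 (Set.Icc a b))
    (hKo : ∀ u ∈ Set.Icc a b, KoMat (𝔄 u))
    (At : Matrix (Fin N) (Fin N) ℝ) (bt : Fin N → ℝ) (hAt : KoMat At)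
    (cmin : ℝ) (hcmin : 0 < cmin)
    (zstar : Fin N → ℝ)
    (hzstar : ∀ i : Fin N,
      min (sSup ((fun u => (𝔄 u *ᵥ zstar - 𝔅 u) i) '' Set.Icc a b))
        ((At *ᵥ zstar - bt) i) = 0) :
    ∃ C > (0:ℝ),
      ∀ (P : PenaltyTerm N) (dπ : Fin N → ℝ → ℝ),
        (∀ i y, 0 < y → HasDerivAt (P.π i) (dπ i y) y) →
        (∀ i, ContinuousOn (dπ i) (Set.Ioi (0:ℝ))) →
        (∀ i y, 0 < y → cmin ≤ dπ i y) →
        ∀ ρ > (0:ℝ), ∀ zρ : Fin N → ℝ,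
          PenObstEq 𝔄 𝔅 (Set.Icc a b) At bt P ρ zρ →
          ‖zstar - zρ‖ ≤ C / ρ :=
  penalised_obstacle_error_estimate_general N a b hab 𝔄 𝔅 hAcont hbcont hKo At bt hAt cmin hcmin
    zstar hzstar
end

section
/- The Newton-like iteration for the penalised obstacle problem with Π(y) = max{y,0} is well defined (each matrix A_{u^max(z^n)} + ρ A^+(z^n) lies in K^o_N and is invertible), and there exists a constant C > 0 such that for every starting value z^0 ∈ ℝ^N the generated sequence (z^n)_{n≥0} satisfies ‖z^n‖∞ ≤ C for all n ≥ 1. -/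
open Matrix Filter

/-- The matrix `A_{u^max(y)}` whose `i`-th row is the `i`-th row of `A_{u^max(y,i)}`. -/
def AmaxMat {N : ℕ} (𝔄 : ℝ → Matrix (Fin N) (Fin N) ℝ)
    (umax : (Fin N → ℝ) → Fin N → ℝ) (y : Fin N → ℝ) :
    Matrix (Fin N) (Fin N) ℝ :=
  fun i j => 𝔄 (umax y i) i j

/-- The vector `b_{u^max(y)}` whose `i`-th entry is `(b_{u^max(y,i)})_i`. -/
def bmaxVec {N : ℕ} (𝔅 : ℝ → (Fin N → ℝ))
    (umax : (Fin N → ℝ) → Fin N → ℝ) (y : Fin N → ℝ) : Fin N → ℝ :=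
  fun i => 𝔅 (umax y i) i

/-- The matrix `A⁺(y)`: its `i`-th row is the `i`-th row of `Ã` if
`(b̃ - Ã y)_i > 0`, and the zero row otherwise. -/
noncomputable def AplusMat {N : ℕ} (At : Matrix (Fin N) (Fin N) ℝ)
    (bt : Fin N → ℝ) (y : Fin N → ℝ) : Matrix (Fin N) (Fin N) ℝ :=
  fun i j => if 0 < (bt - At *ᵥ y) i then At i j else 0

/-- The vector `b⁺(y)`: its `i`-th entry is `(b̃)_i` if `(b̃ - Ã y)_i > 0`,
and `0` otherwise. -/
noncomputable def bplusVec {N : ℕ} (At : Matrix (Fin N) (Fin N) ℝ)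
    (bt : Fin N → ℝ) (y : Fin N → ℝ) : Fin N → ℝ :=
  fun i => if 0 < (bt - At *ᵥ y) i then bt i else 0

/-!
Let `rowGap M r = M r r - ∑_{s ≠ r} |M r s|` be the diagonal-dominance margin of row `r`.
Row `r` of the Newton matrix `A_{u^max(y)} + ρ A⁺(y)` is row `r` of some `A_u`, plus possibly
`ρ` times row `r` of `Ã`; since margins are superadditive and `Ã` has positive margins, every
row margin of the Newton matrix is at least `δ = min_{u ∈ U, r} rowGap A_u r`, which is positive
by compactness of `U`. Looking at an index where `|x|` is maximal gives `‖x‖∞ ≤ ‖M x‖∞ / δ` for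
every such matrix `M`, while the right-hand side `b_{u^max(y)} + ρ b⁺(y)` is bounded by
`max_U ‖b_u‖∞ + ρ ‖b̃‖∞`, independently of `y`.
-/

section RowGap

variable {n : Type*} [Fintype n] [DecidableEq n]

def rowGap (M : Matrix n n ℝ) (r : n) : ℝ :=
  M r r - ∑ s ∈ Finset.univ.erase r, |M r s|

theorem rowGap_add_le (M M' : Matrix n n ℝ) (r : n) :
    rowGap M r + rowGap M' r ≤ rowGap (M + M') r := by
  have h : ∑ s ∈ Finset.univ.erase r, |M r s + M' r s| ≤
      ∑ s ∈ Finset.univ.erase r, |M r s| + ∑ s ∈ Finset.univ.erase r, |M' r s| := by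
    rw [← Finset.sum_add_distrib]
    exact Finset.sum_le_sum fun s _ => abs_add_le _ _
  simp only [rowGap, Matrix.add_apply]
  linarith

theorem rowGap_smul {ρ : ℝ} (hρ : 0 ≤ ρ) (M : Matrix n n ℝ) (r : n) :
    rowGap (ρ • M) r = ρ * rowGap M r := by
  simp only [rowGap, Matrix.smul_apply, smul_eq_mul, abs_mul, abs_of_nonneg hρ, mul_sub,
    Finset.mul_sum]

theorem rowGap_mul_abs_le_abs_mulVec (M : Matrix n n ℝ) {x : n → ℝ} {i : n}
    (hi : ∀ s, |x s| ≤ |x i|) : rowGap M i * |x i| ≤ |(M *ᵥ x) i| := by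
  calc rowGap M i * |x i|
      = M i i * |x i| - ∑ s ∈ Finset.univ.erase i, |M i s| * |x i| := by
        rw [rowGap, sub_mul, Finset.sum_mul]
    _ ≤ |M i i * x i| - ∑ s ∈ Finset.univ.erase i, |M i s * x s| := by
        gcongr with s
        · rw [abs_mul]
          gcongr
          exact le_abs_self _
        · rw [abs_mul]
          exact mul_le_mul_of_nonneg_left (hi s) (abs_nonneg _)
    _ ≤ |M i i * x i| - |∑ s ∈ Finset.univ.erase i, M i s * x s| := by
        gcongr
        exact Finset.abs_sum_le_sum_abs _ _
    _ ≤ |M i i * x i + ∑ s ∈ Finset.univ.erase i, M i s * x s| := abs_sub_abs_le_abs_add _ _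
    _ = |(M *ᵥ x) i| := by
        rw [Matrix.mulVec, dotProduct, ← Finset.add_sum_erase _ _ (Finset.mem_univ i)]

theorem norm_le_norm_mulVec_div {M : Matrix n n ℝ} {δ : ℝ} (hδ : 0 < δ)
    (hM : ∀ r, δ ≤ rowGap M r) (x : n → ℝ) : ‖x‖ ≤ ‖M *ᵥ x‖ / δ := by
  refine (pi_norm_le_iff_of_nonneg (by positivity)).2 fun j => ?_
  have : Nonempty n := ⟨j⟩
  obtain ⟨i, hi⟩ := Finite.exists_max fun s => |x s|
  have hxi : δ * |x i| ≤ ‖M *ᵥ x‖ :=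
    calc δ * |x i| ≤ rowGap M i * |x i| := by gcongr; exact hM i
      _ ≤ |(M *ᵥ x) i| := rowGap_mul_abs_le_abs_mulVec M hi
      _ ≤ ‖M *ᵥ x‖ := norm_le_pi_norm (M *ᵥ x) i
  rw [Real.norm_eq_abs, le_div_iff₀ hδ]
  calc |x j| * δ ≤ |x i| * δ := mul_le_mul_of_nonneg_right (hi j) hδ.le
    _ ≤ ‖M *ᵥ x‖ := by rw [mul_comm]; exact hxi

theorem exists_pos_le_rowGap {X : Type*} [TopologicalSpace X] {K : Set X} (hK : IsCompact K)
    {𝔄 : X → Matrix n n ℝ} (hcont : ContinuousOn 𝔄 K)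
    (hpos : ∀ u ∈ K, ∀ r, 0 < rowGap (𝔄 u) r) :
    ∃ δ > 0, ∀ u ∈ K, ∀ r, δ ≤ rowGap (𝔄 u) r := by
  have hrow : ∀ r, ∃ δ > 0, ∀ u ∈ K, δ ≤ rowGap (𝔄 u) r := fun r => by
    have hentry : ∀ s, ContinuousOn (fun u => 𝔄 u r s) K := fun s =>
      (continuous_id.matrix_elem r s).comp_continuousOn hcont
    have hgap : ContinuousOn (fun u => rowGap (𝔄 u) r) K :=
      (hentry r).sub (continuousOn_finsetSum _ fun s _ => (hentry s).abs)
    exact hK.exists_forall_le' hgap fun u hu => hpos u hu r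
  choose δ hδ hδle using hrow
  cases isEmpty_or_nonempty n
  · exact ⟨1, one_pos, fun _ _ r => isEmptyElim r⟩
  · obtain ⟨r₀, hr₀⟩ := Finite.exists_min δ
    exact ⟨δ r₀, hδ r₀, fun u hu r => (hr₀ r).trans (hδle r u hu)⟩

end RowGap

theorem koMat_iff {N : ℕ} (A : Matrix (Fin N) (Fin N) ℝ) :
    KoMat A ↔ (∀ r s, r ≠ s → A r s ≤ 0) ∧ ∀ r, 0 < rowGap A r := by
  simp only [KoMat, rowGap, sub_pos]

theorem KoMat.isUnit {N : ℕ} {A : Matrix (Fin N) (Fin N) ℝ} (hA : KoMat A) : IsUnit A := by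
  refine (Matrix.isUnit_iff_isUnit_det A).2 (isUnit_iff_ne_zero.2 ?_)
  refine det_ne_zero_of_sum_row_lt_diag fun k => ?_
  have hk := hA.2 k
  rwa [Real.norm_eq_abs, abs_of_pos ((Finset.sum_nonneg fun _ _ => abs_nonneg _).trans_lt hk)]

section Newton

variable {N : ℕ} {𝔄 : ℝ → Matrix (Fin N) (Fin N) ℝ} {umax : (Fin N → ℝ) → Fin N → ℝ}
  {At : Matrix (Fin N) (Fin N) ℝ} {bt : Fin N → ℝ} {ρ : ℝ}

theorem rowGap_aplusMat_nonneg (hAt : KoMat At) (y : Fin N → ℝ) (r : Fin N) :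
    0 ≤ rowGap (AplusMat At bt y) r := by
  by_cases h : 0 < (bt - At *ᵥ y) r
  · simp only [rowGap, AplusMat, if_pos h]
    exact (((koMat_iff At).1 hAt).2 r).le
  · simp only [rowGap, AplusMat, h, if_false, abs_zero, Finset.sum_const_zero, sub_zero, le_refl]

theorem le_rowGap_amaxMat_add_smul_aplusMat (hAt : KoMat At) (hρ : 0 ≤ ρ) {δ : ℝ} {y : Fin N → ℝ}
    (hδ : ∀ r, δ ≤ rowGap (𝔄 (umax y r)) r) (r : Fin N) :
    δ ≤ rowGap (AmaxMat 𝔄 umax y + ρ • AplusMat At bt y) r :=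
  calc δ ≤ rowGap (AmaxMat 𝔄 umax y) r + ρ * rowGap (AplusMat At bt y) r := by
        have := mul_nonneg hρ (rowGap_aplusMat_nonneg (bt := bt) hAt y r)
        exact (hδ r).trans (le_add_of_nonneg_right this)
    _ ≤ rowGap (AmaxMat 𝔄 umax y + ρ • AplusMat At bt y) r := by
        rw [← rowGap_smul hρ]
        exact rowGap_add_le _ _ r

theorem amaxMat_add_smul_aplusMat_nonpos_of_ne (hAt : KoMat At) (hρ : 0 ≤ ρ) {y : Fin N → ℝ}
    (hA : ∀ r s, r ≠ s → 𝔄 (umax y r) r s ≤ 0) (r s : Fin N) (hrs : r ≠ s) :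
    (AmaxMat 𝔄 umax y + ρ • AplusMat At bt y) r s ≤ 0 := by
  have hplus : AplusMat At bt y r s ≤ 0 := by
    unfold AplusMat
    split_ifs
    exacts [hAt.1 r s hrs, le_rfl]
  simpa only [Matrix.add_apply, Matrix.smul_apply, smul_eq_mul, AmaxMat] using
    add_nonpos (hA r s hrs) (mul_nonpos_of_nonneg_of_nonpos hρ hplus)

theorem norm_bmaxVec_le {𝔅 : ℝ → (Fin N → ℝ)} {B : ℝ} (hB : 0 ≤ B) {y : Fin N → ℝ}
    (h : ∀ i, ‖𝔅 (umax y i)‖ ≤ B) : ‖bmaxVec 𝔅 umax y‖ ≤ B :=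
  (pi_norm_le_iff_of_nonneg hB).2 fun i => (norm_le_pi_norm (𝔅 (umax y i)) i).trans (h i)

theorem norm_bplusVec_le (y : Fin N → ℝ) : ‖bplusVec At bt y‖ ≤ ‖bt‖ := by
  refine (pi_norm_le_iff_of_nonneg (norm_nonneg _)).2 fun i => ?_
  unfold bplusVec
  split_ifs
  exacts [norm_le_pi_norm bt i, by simp]

end Newton

theorem newton_like_obstacle_wellDefined_bounded_general
    (N : ℕ) (a b : ℝ)
    (𝔄 : ℝ → Matrix (Fin N) (Fin N) ℝ) (𝔅 : ℝ → (Fin N → ℝ))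
    (hAcont : ContinuousOn 𝔄 (Set.Icc a b)) (hbcont : ContinuousOn 𝔅 (Set.Icc a b))
    (hKo : ∀ u ∈ Set.Icc a b, KoMat (𝔄 u))
    (At : Matrix (Fin N) (Fin N) ℝ) (bt : Fin N → ℝ) (hAt : KoMat At)
    (ρ : ℝ) (hρ : 0 < ρ)
    (umax : (Fin N → ℝ) → Fin N → ℝ)
    (hsel : ∀ (y : Fin N → ℝ) (i : Fin N), umax y i ∈ Set.Icc a b ∧
      IsGreatest ((fun v => (𝔄 v *ᵥ y - 𝔅 v) i) '' Set.Icc a b)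
        ((𝔄 (umax y i) *ᵥ y - 𝔅 (umax y i)) i)) :
    (∀ y : Fin N → ℝ,
        KoMat (AmaxMat 𝔄 umax y + ρ • AplusMat At bt y) ∧
        IsUnit (AmaxMat 𝔄 umax y + ρ • AplusMat At bt y)) ∧
    ∃ C > (0:ℝ), ∀ z : ℕ → (Fin N → ℝ),
      (∀ n : ℕ,
        (AmaxMat 𝔄 umax (z n) + ρ • AplusMat At bt (z n)) *ᵥ z (n + 1) =
          bmaxVec 𝔅 umax (z n) + ρ • bplusVec At bt (z n)) →
      ∀ n : ℕ, 1 ≤ n → ‖z n‖ ≤ C := by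
  obtain ⟨δ, hδ, hδle⟩ := exists_pos_le_rowGap isCompact_Icc hAcont fun u hu =>
    ((koMat_iff _).1 (hKo u hu)).2
  obtain ⟨B, hB, hBle⟩ := (isCompact_Icc.image_of_continuousOn hbcont).isBounded.exists_pos_norm_le
  have hgap : ∀ y r, δ ≤ rowGap (AmaxMat 𝔄 umax y + ρ • AplusMat At bt y) r := fun y =>
    le_rowGap_amaxMat_add_smul_aplusMat hAt hρ.le fun r => hδle _ (hsel y r).1 r
  have hKoIter : ∀ y, KoMat (AmaxMat 𝔄 umax y + ρ • AplusMat At bt y) := fun y =>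
    (koMat_iff _).2
      ⟨amaxMat_add_smul_aplusMat_nonpos_of_ne hAt hρ.le fun r => (hKo _ (hsel y r).1).1 r,
        fun r => hδ.trans_le (hgap y r)⟩
  have hrhs : ∀ y, ‖bmaxVec 𝔅 umax y + ρ • bplusVec At bt y‖ ≤ B + ρ * ‖bt‖ := fun y =>
    calc ‖bmaxVec 𝔅 umax y + ρ • bplusVec At bt y‖
        ≤ ‖bmaxVec 𝔅 umax y‖ + ‖ρ • bplusVec At bt y‖ := norm_add_le _ _
      _ = ‖bmaxVec 𝔅 umax y‖ + ρ * ‖bplusVec At bt y‖ := by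
          rw [norm_smul, Real.norm_of_nonneg hρ.le]
      _ ≤ B + ρ * ‖bt‖ := by
          gcongr
          · exact norm_bmaxVec_le hB.le fun i => hBle _ ⟨_, (hsel y i).1, rfl⟩
          · exact norm_bplusVec_le y
  refine ⟨fun y => ⟨hKoIter y, (hKoIter y).isUnit⟩, max ((B + ρ * ‖bt‖) / δ) 1,
    lt_max_of_lt_right one_pos, ?_⟩
  rintro z hz (_ | m) hm
  · omega
  calc ‖z (m + 1)‖ ≤ ‖(AmaxMat 𝔄 umax (z m) + ρ • AplusMat At bt (z m)) *ᵥ z (m + 1)‖ / δ :=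
        norm_le_norm_mulVec_div hδ (hgap (z m)) _
    _ ≤ (B + ρ * ‖bt‖) / δ := by rw [hz m]; gcongr; exact hrhs _
    _ ≤ max ((B + ρ * ‖bt‖) / δ) 1 := le_max_left _ _

/-- The Newton-like iteration for the penalised obstacle problem (with
`Π(y) = max{y,0}`) is well defined, and its iterates are bounded from step 1
on, uniformly in the starting value. -/
theorem newton_like_obstacle_wellDefined_bounded
    (N : ℕ) (hN : 0 < N) (a b : ℝ) (hab : a ≤ b)
    (𝔄 : ℝ → Matrix (Fin N) (Fin N) ℝ) (𝔅 : ℝ → (Fin N → ℝ))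
    (hAcont : ContinuousOn 𝔄 (Set.Icc a b)) (hbcont : ContinuousOn 𝔅 (Set.Icc a b))
    (hKo : ∀ u ∈ Set.Icc a b, KoMat (𝔄 u))
    (At : Matrix (Fin N) (Fin N) ℝ) (bt : Fin N → ℝ) (hAt : KoMat At)
    (ρ : ℝ) (hρ : 0 < ρ)
    (umax : (Fin N → ℝ) → Fin N → ℝ)
    (hsel : ∀ (y : Fin N → ℝ) (i : Fin N), umax y i ∈ Set.Icc a b ∧
      IsGreatest ((fun v => (𝔄 v *ᵥ y - 𝔅 v) i) '' Set.Icc a b)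
        ((𝔄 (umax y i) *ᵥ y - 𝔅 (umax y i)) i)) :
    (∀ y : Fin N → ℝ,
        KoMat (AmaxMat 𝔄 umax y + ρ • AplusMat At bt y) ∧
        IsUnit (AmaxMat 𝔄 umax y + ρ • AplusMat At bt y)) ∧
    ∃ C > (0:ℝ), ∀ z : ℕ → (Fin N → ℝ),
      (∀ n : ℕ,
        (AmaxMat 𝔄 umax (z n) + ρ • AplusMat At bt (z n)) *ᵥ z (n + 1) =
          bmaxVec 𝔅 umax (z n) + ρ • bplusVec At bt (z n)) →
      ∀ n : ℕ, 1 ≤ n → ‖z n‖ ≤ C :=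
  newton_like_obstacle_wellDefined_bounded_general N a b 𝔄 𝔅 hAcont hbcont hKo At bt hAt ρ hρ umax
    hsel
end
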